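/- Let t_n := (1/2^{n−1})·T_n for n ≥ 1, where T_n is the n-th Chebyshev polynomial of the first kind regarded as a polynomial over ℂ, and let K[(t_n)] := {z ∈ ℂ : the sequence ((t_n ∘ ⋯ ∘ t_1)(z))_{n≥1} is bounded}. Then: (a) every real number x with −5/4 ≤ x ≤ 5/4, viewed as an element of ℂ, belongs to K[(t_n)]; (b) the point z₀ := (4/5)·i belongs to K[(t_n)]; (c) z₀ does not belong to the filled ellipse E_2 := {x + iy ∈ ℂ : (x/(5/4))² + (y/(3/4))² ≤ 1}; consequently K[(t_n)] is not contained in E_2. -/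

import Mathlib

/-! Since `5/4 = cosh (log 2)`, on `[-5/4, 5/4]` we have
`|T_n| ≤ cosh (n log 2) = (2^n + 2^(-n))/2`, so every `t_n` maps the real interval `[-5/4, 5/4]`
into itself and all orbits starting there stay bounded. The point `z₀ = 4i/5` is sent by
`t_2 ∘ t_1` to `z₀² - 1/2 = -57/50`, which lies in that interval, while `z₀` itself is outside
`E_2` because `(4/5) / (3/4) > 1`. -/

/-- Evaluation of the composition `p_n ∘ ⋯ ∘ p_1` at a point (`p_1` applied first);
for `n = 0` it is the identity. -/
noncomputable def compEval (p : ℕ → Polynomial ℂ) : ℕ → ℂ → ℂ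
  | 0, z => z
  | n + 1, z => (p (n + 1)).eval (compEval p n z)

/-- The `n`-th Chebyshev (minimal) polynomial on `[-1,1]` over `ℂ`:
`t_n = (1/2^(n-1)) T_n`. -/
noncomputable def chebMinimalC (n : ℕ) : Polynomial ℂ :=
  Polynomial.C ((1 : ℂ) / 2 ^ (n - 1)) * Polynomial.Chebyshev.T ℂ (n : ℤ)

/-- The filled ellipse with foci `±1` and semiaxes `5/4` and `3/4`. -/
def filledEllipseE2 : Set ℂ :=
  {z : ℂ | (z.re / (5 / 4)) ^ 2 + (z.im / (3 / 4)) ^ 2 ≤ 1}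

open Polynomial Polynomial.Chebyshev Real Set Bornology

namespace Polynomial.Chebyshev

theorem abs_eval_T_real_abs (n : ℤ) (x : ℝ) : |(T ℝ n).eval (|x|)| = |(T ℝ n).eval x| := by
  rcases abs_choice x with h | h <;> simp [h, T_eval_neg, abs_mul]

theorem abs_eval_T_real_le_cosh (n : ℤ) {x a : ℝ} (hx : |x| ≤ cosh a) :
    |(T ℝ n).eval x| ≤ cosh (n * a) := by
  rcases le_total |x| 1 with h | h
  · exact (abs_eval_T_real_le_one n h).trans (one_le_cosh _)
  · rw [← abs_eval_T_real_abs, ← cosh_arcosh h, T_real_cosh, abs_of_pos (cosh_pos _),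
      cosh_le_cosh, abs_mul, abs_mul]
    refine mul_le_mul_of_nonneg_left ?_ (abs_nonneg _)
    rwa [← cosh_le_cosh, cosh_arcosh h]

end Polynomial.Chebyshev

section compEval

variable {p : ℕ → ℂ[X]} {S : Set ℂ} {m : ℕ} {z : ℂ}

theorem compEval_mem_of_mapsTo (hm : compEval p m z ∈ S)
    (hp : ∀ n > m, MapsTo (p n).eval S S) {n : ℕ} (hn : m ≤ n) : compEval p n z ∈ S := by
  induction n, hn using Nat.le_induction with
  | base => exact hm
  | succ n _ ih => exact hp (n + 1) (by omega) ih

theorem isBounded_range_compEval (hS : IsBounded S) (hm : compEval p m z ∈ S)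
    (hp : ∀ n > m, MapsTo (p n).eval S S) : IsBounded (range fun n ↦ compEval p n z) := by
  have hsub : (range fun n ↦ compEval p n z) ⊆ (fun n ↦ compEval p n z) '' Iio m ∪ S := by
    rintro _ ⟨n, rfl⟩
    rcases lt_or_ge n m with h | h
    · exact Or.inl ⟨n, h, rfl⟩
    · exact Or.inr (compEval_mem_of_mapsTo hm hp h)
  exact (((finite_Iio m).image _).isBounded.union hS).subset hsub

end compEval

theorem eval_ofReal_chebMinimalC (n : ℕ) (x : ℝ) :
    (chebMinimalC n).eval (x : ℂ) = (((T ℝ n).eval x / 2 ^ (n - 1) : ℝ) : ℂ) := by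
  simp [chebMinimalC, div_eq_inv_mul]

theorem compEval_chebMinimalC_two (z : ℂ) : compEval chebMinimalC 2 z = z ^ 2 - 1 / 2 := by
  simp [compEval, chebMinimalC, T_two, mul_sub, ← mul_assoc]

theorem mapsTo_eval_chebMinimalC {n : ℕ} (hn : 1 ≤ n) :
    MapsTo (chebMinimalC n).eval ((↑) '' Icc (-5 / 4 : ℝ) (5 / 4))
      ((↑) '' Icc (-5 / 4 : ℝ) (5 / 4)) := by
  rintro _ ⟨x, hx, rfl⟩
  rw [mem_Icc, neg_div] at hx
  refine ⟨_, ?_, (eval_ofReal_chebMinimalC n x).symm⟩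
  have hcosh : cosh (log 2) = 5 / 4 := by rw [cosh_log two_pos]; norm_num
  have hT := abs_eval_T_real_le_cosh n (a := log 2) (x := x) (hcosh ▸ abs_le.2 hx)
  have h2n : (2 : ℝ) ^ n = 2 ^ (n - 1) * 2 := by rw [← pow_succ, Nat.sub_add_cancel hn]
  rw [Int.cast_natCast, ← log_pow, cosh_log (by positivity), h2n] at hT
  have hN : (1 : ℝ) ≤ 2 ^ (n - 1) := one_le_pow₀ one_le_two
  have hN₀ : (0 : ℝ) < 2 ^ (n - 1) := by positivity
  rw [mem_Icc, neg_div, ← abs_le, abs_div, abs_of_pos hN₀, div_le_iff₀ hN₀]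
  calc |(T ℝ n).eval x| ≤ (2 ^ (n - 1) * 2 + (2 ^ (n - 1) * 2)⁻¹) / 2 := hT
    _ ≤ 5 / 4 * 2 ^ (n - 1) := by
      rw [mul_inv, div_le_iff₀ two_pos]
      nlinarith [inv_le_one_of_one_le₀ hN]

theorem julia_of_minimal_chebyshev_not_subset_E2 :
    (∀ x : ℝ, -5/4 ≤ x → x ≤ 5/4 →
      (x : ℂ) ∈ {z : ℂ | ∃ M : ℝ, ∀ n ≥ 1, ‖compEval chebMinimalC n z‖ ≤ M}) ∧
    ((4 / 5 : ℂ) * Complex.I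
      ∈ {z : ℂ | ∃ M : ℝ, ∀ n ≥ 1, ‖compEval chebMinimalC n z‖ ≤ M}) ∧
    ((4 / 5 : ℂ) * Complex.I ∉ filledEllipseE2) ∧
    ¬ ({z : ℂ | ∃ M : ℝ, ∀ n ≥ 1, ‖compEval chebMinimalC n z‖ ≤ M}
        ⊆ filledEllipseE2) := by
  have hbounded : ∀ z m, compEval chebMinimalC m z ∈ ((↑) '' Icc (-5 / 4 : ℝ) (5 / 4)) →
      ∃ M : ℝ, ∀ n ≥ 1, ‖compEval chebMinimalC n z‖ ≤ M := fun z m hm ↦ by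
    obtain ⟨M, hM⟩ := isBounded_iff_forall_norm_le.1 <|
      isBounded_range_compEval (isCompact_Icc.image Complex.continuous_ofReal).isBounded hm
        fun n hn ↦ mapsTo_eval_chebMinimalC (by omega)
    exact ⟨M, fun n _ ↦ hM _ ⟨n, rfl⟩⟩
  have hz₀ : (4 / 5 : ℂ) * Complex.I ∈ {z : ℂ | ∃ M : ℝ, ∀ n ≥ 1,
      ‖compEval chebMinimalC n z‖ ≤ M} :=
    hbounded _ 2 ⟨-57 / 50, by norm_num, by
      rw [compEval_chebMinimalC_two, mul_pow, Complex.I_sq]; push_cast; ring⟩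
  have hz₀E : (4 / 5 : ℂ) * Complex.I ∉ filledEllipseE2 := by
    norm_num [filledEllipseE2]
  exact ⟨fun x hx₁ hx₂ ↦ hbounded x 0 ⟨x, ⟨hx₁, hx₂⟩, rfl⟩, hz₀, hz₀E, fun h ↦ hz₀E (h hz₀)⟩
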